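/- arXiv:2112.06580 — 5 statements merged into one kernel-verified Lean document; each statement's English description precedes it below -/
import Mathlib

section
/- Marking-based data reduction is sound: let C = {C_1,...,C_k} be a clustering of X ⊆ R^d, and for each cluster C_i and each coordinate j, mark the min(s+1, |C_i|) points of C_i with smallest j-th coordinate and the min(s+1, |C_i|) points with largest j-th coordinate. Let S_i = C_i ∩ Y where Y is the set of marked points. Then there exists W ⊆ X with |W| ≤ s such that {C_1 \ W, ..., C_k \ W} is explainable if and only if there exists W' ⊆ Y with |W'| ≤ s such that {S_1 \ W', ..., S_k \ W'} is explainable. Moreover |Y| ≤ 2(s+1)dk. -/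
/-- A clustering (given as a list of clusters) is *explainable* for a ground set `X`
if it is induced by a threshold tree: either the tree is a single leaf and the unique
cluster is `X`, or the root applies an axis-parallel cut `Cut_{i,θ}` and the two parts
are recursively explained; the order of clusters is irrelevant. -/
inductive IsExplainable {ι : Type} : Finset (ι → ℝ) → List (Finset (ι → ℝ)) → Prop
  | leaf (X : Finset (ι → ℝ)) : IsExplainable X [X]
  | node (X : Finset (ι → ℝ)) (i : ι) (θ : ℝ) (L1 L2 : List (Finset (ι → ℝ))) :
      IsExplainable (X.filter fun x => x i ≤ θ) L1 →
      IsExplainable (X.filter fun x => θ < x i) L2 →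
      IsExplainable X (L1 ++ L2)
  | perm (X : Finset (ι → ℝ)) (L1 L2 : List (Finset (ι → ℝ))) :
      L1.Perm L2 → IsExplainable X L1 → IsExplainable X L2


theorem IsExplainable.mem_subset {ι : Type} {X : Finset (ι → ℝ)} {L : List (Finset (ι → ℝ))}
    (h : IsExplainable X L) : ∀ A ∈ L, A ⊆ X := by
  induction h with
  | leaf X => intro A hA; simp at hA; subst hA; exact subset_rfl
  | node X i θ L1 L2 h1 h2 ih1 ih2 =>
      intro A hA
      rcases List.mem_append.mp hA with h | h
      · exact (ih1 A h).trans (Finset.filter_subset _ _)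
      · exact (ih2 A h).trans (Finset.filter_subset _ _)
  | perm X L1 L2 hp h ih => intro A hA; exact ih A (hp.mem_iff.mpr hA)

theorem IsExplainable.inter {ι : Type} [DecidableEq (ι → ℝ)] {X : Finset (ι → ℝ)}
    {L : List (Finset (ι → ℝ))} (Z : Finset (ι → ℝ))
    (h : IsExplainable X L) : IsExplainable (X ∩ Z) (L.map (· ∩ Z)) := by
  induction h with
  | leaf X => simpa using IsExplainable.leaf (X ∩ Z)
  | node X i θ L1 L2 h1 h2 ih1 ih2 =>
      rw [List.map_append]
      refine IsExplainable.node _ i θ _ _ ?_ ?_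
      · convert ih1 using 1; ext x; simp; tauto
      · convert ih2 using 1; ext x; simp; tauto
  | perm X L1 L2 hp h ih => exact .perm _ _ _ (hp.map _) ih

theorem lift_explainable {d : ℕ} (Y0 : Finset (Fin d → ℝ)) (esc : (Fin d → ℝ) → Finset (Fin d → ℝ))
    {Z' : Finset (Fin d → ℝ)} {L' : List (Finset (Fin d → ℝ))}
    (h : IsExplainable Z' L') :
    ∀ Z : Finset (Fin d → ℝ),
      Z.filter (· ∈ Y0) = Z' →
      (∀ x ∈ Z, x ∉ Y0 → esc x ∈ L' ∧
        (∀ j, (∃ a ∈ esc x, a j ≤ x j) ∧ ∃ b ∈ esc x, x j ≤ b j)) →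
      IsExplainable Z (L'.map fun A => A ∪ Z.filter fun x => x ∉ Y0 ∧ esc x = A) := by
  induction h with
  | leaf Z' =>
      intro Z hZ hesc
      have hg : Z' ∪ (Z.filter fun x => x ∉ Y0 ∧ esc x = Z') = Z := by
        apply Finset.Subset.antisymm
        · apply Finset.union_subset
          · rw [← hZ]; exact Finset.filter_subset _ _
          · exact Finset.filter_subset _ _
        · intro x hx
          by_cases hy : x ∈ Y0
          · exact Finset.mem_union_left _ (hZ ▸ Finset.mem_filter.mpr ⟨hx, hy⟩)
          · refine Finset.mem_union_right _ (Finset.mem_filter.mpr ⟨hx, hy, ?_⟩)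
            have := (hesc x hx hy).1
            simpa using this
      simpa [hg] using IsExplainable.leaf Z
  | node Z' i θ L1 L2 h1 h2 ih1 ih2 =>
      intro Z hZ hesc
      -- members of L1 are ≤ θ in coord i, members of L2 are > θ
      have hm1 : ∀ A ∈ L1, ∀ a ∈ A, a i ≤ θ := fun A hA a ha =>
        (Finset.mem_filter.mp (h1.mem_subset A hA ha)).2
      have hm2 : ∀ A ∈ L2, ∀ a ∈ A, θ < a i := fun A hA a ha =>
        (Finset.mem_filter.mp (h2.mem_subset A hA ha)).2
      set Zl := Z.filter fun x => x i ≤ θ with hZl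
      set Zr := Z.filter fun x => θ < x i with hZr
      -- unmarked points of Zl have escorts in L1, of Zr in L2
      have hescl : ∀ x ∈ Zl, x ∉ Y0 → esc x ∈ L1 := by
        intro x hx hy
        have hxZ : x ∈ Z := Finset.mem_of_mem_filter _ hx
        have h := hesc x hxZ hy
        rcases List.mem_append.mp h.1 with hm | hm
        · exact hm
        · exfalso
          obtain ⟨a, ha, hax⟩ := (h.2 i).1
          have : θ < a i := hm2 _ hm a ha
          have hxle : x i ≤ θ := (Finset.mem_filter.mp hx).2
          linarith
      have hescr : ∀ x ∈ Zr, x ∉ Y0 → esc x ∈ L2 := by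
        intro x hx hy
        have hxZ : x ∈ Z := Finset.mem_of_mem_filter _ hx
        have h := hesc x hxZ hy
        rcases List.mem_append.mp h.1 with hm | hm
        · exfalso
          obtain ⟨b, hb, hbx⟩ := (h.2 i).2
          have : b i ≤ θ := hm1 _ hm b hb
          have hxgt : θ < x i := (Finset.mem_filter.mp hx).2
          linarith
        · exact hm
      have hl : IsExplainable Zl (L1.map fun A => A ∪ Zl.filter fun x => x ∉ Y0 ∧ esc x = A) := by
        apply ih1
        · rw [hZl, Finset.filter_comm, hZ]
        · intro x hx hy
          exact ⟨hescl x hx hy, (hesc x (Finset.mem_of_mem_filter _ hx) hy).2⟩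
      have hr : IsExplainable Zr (L2.map fun A => A ∪ Zr.filter fun x => x ∉ Y0 ∧ esc x = A) := by
        apply ih2
        · rw [hZr, Finset.filter_comm, hZ]
        · intro x hx hy
          exact ⟨hescr x hx hy, (hesc x (Finset.mem_of_mem_filter _ hx) hy).2⟩
      -- replace the local filters by the global one
      have hml : (L1.map fun A => A ∪ Zl.filter fun x => x ∉ Y0 ∧ esc x = A)
          = L1.map fun A => A ∪ Z.filter fun x => x ∉ Y0 ∧ esc x = A := by
        apply List.map_congr_left
        intro A hA
        congr 1
        ext x
        simp only [Finset.mem_filter, hZl]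
        constructor
        · rintro ⟨⟨hx, _⟩, h2, h3⟩; exact ⟨hx, h2, h3⟩
        · rintro ⟨hx, h2, h3⟩
          refine ⟨⟨hx, ?_⟩, h2, h3⟩
          obtain ⟨b, hb, hbx⟩ := ((hesc x hx h2).2 i).2
          have := hm1 A hA b (h3 ▸ hb)
          linarith
      have hmr : (L2.map fun A => A ∪ Zr.filter fun x => x ∉ Y0 ∧ esc x = A)
          = L2.map fun A => A ∪ Z.filter fun x => x ∉ Y0 ∧ esc x = A := by
        apply List.map_congr_left
        intro A hA
        congr 1
        ext x
        simp only [Finset.mem_filter, hZr]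
        constructor
        · rintro ⟨⟨hx, _⟩, h2, h3⟩; exact ⟨hx, h2, h3⟩
        · rintro ⟨hx, h2, h3⟩
          refine ⟨⟨hx, ?_⟩, h2, h3⟩
          obtain ⟨a, ha, hax⟩ := ((hesc x hx h2).2 i).1
          have := hm2 A hA a (h3 ▸ ha)
          linarith
      rw [List.map_append]
      exact IsExplainable.node Z i θ _ _ (hml ▸ hl) (hmr ▸ hr)
  | perm Z' L1 L2 hp h ih =>
      intro Z hZ hesc
      have h1 : IsExplainable Z (L1.map fun A => A ∪ Z.filter fun x => x ∉ Y0 ∧ esc x = A) := by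
        apply ih Z hZ
        intro x hx hy
        exact ⟨hp.mem_iff.mpr (hesc x hx hy).1, (hesc x hx hy).2⟩
      exact .perm _ _ _ (hp.map _) h1

theorem IsExplainable.ne_nil {ι : Type} {X : Finset (ι → ℝ)} {L : List (Finset (ι → ℝ))}
    (h : IsExplainable X L) : L ≠ [] := by
  induction h with
  | leaf X => simp
  | node X i θ L1 L2 h1 h2 ih1 ih2 => simp [List.append_eq_nil_iff]; intro h; exact absurd h ih1
  | perm X L1 L2 hp h ih => intro h2; subst h2; exact ih hp.eq_nil

theorem IsExplainable.eq_singleton {ι : Type} [IsEmpty ι] {X : Finset (ι → ℝ)}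
    {L : List (Finset (ι → ℝ))} (h : IsExplainable X L) : L = [X] := by
  induction h with
  | leaf X => rfl
  | node X i θ L1 L2 _ _ _ _ => exact (IsEmpty.false i).elim
  | perm X L1 L2 hp h ih => rw [ih] at hp; exact List.perm_singleton.mp hp.symm

/-- soundness of the marking-based data reduction. For each cluster `C i`
and coordinate `j`, `Mlo i j` (resp. `Mhi i j`) is a set of `min(s+1, |C i|)` points of
`C i` that are smallest (resp. largest) in the `j`-th coordinate. With `Y` the set of
all marked points, the instance on `X` with budget `s` is a yes-instance iff the
instance restricted to `Y` is, and moreover `|Y| ≤ 2(s+1)dk`. -/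
theorem marking_data_reduction {d k s : ℕ} (C : Fin k → Finset (Fin d → ℝ))
    (X : Finset (Fin d → ℝ)) (hX : X = Finset.univ.biUnion C)
    (hdisj : ∀ i j : Fin k, i ≠ j → Disjoint (C i) (C j))
    (Mlo Mhi : Fin k → Fin d → Finset (Fin d → ℝ))
    (hloSub : ∀ i j, Mlo i j ⊆ C i) (hhiSub : ∀ i j, Mhi i j ⊆ C i)
    (hloCard : ∀ i j, (Mlo i j).card = min (s + 1) (C i).card)
    (hhiCard : ∀ i j, (Mhi i j).card = min (s + 1) (C i).card)
    (hloOrd : ∀ i j, ∀ x ∈ Mlo i j, ∀ y ∈ C i, y ∉ Mlo i j → x j ≤ y j)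
    (hhiOrd : ∀ i j, ∀ x ∈ Mhi i j, ∀ y ∈ C i, y ∉ Mhi i j → y j ≤ x j)
    (Y : Finset (Fin d → ℝ))
    (hY : Y = Finset.univ.biUnion fun i : Fin k =>
        Finset.univ.biUnion fun j : Fin d => Mlo i j ∪ Mhi i j) :
    ((∃ W ⊆ X, W.card ≤ s ∧
        IsExplainable (X \ W) (List.ofFn fun i => C i \ W)) ↔
      (∃ W' ⊆ Y, W'.card ≤ s ∧
        IsExplainable (Y \ W') (List.ofFn fun i => (C i ∩ Y) \ W'))) ∧
    Y.card ≤ 2 * (s + 1) * d * k := by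
  classical
  have hCX : ∀ i, C i ⊆ X := fun i => hX ▸ Finset.subset_biUnion_of_mem C (Finset.mem_univ i)
  have hMloY : ∀ i j, Mlo i j ⊆ Y := by
    intro i j a ha
    rw [hY]
    exact Finset.mem_biUnion.mpr ⟨i, Finset.mem_univ i,
      Finset.mem_biUnion.mpr ⟨j, Finset.mem_univ j, Finset.mem_union_left _ ha⟩⟩
  have hMhiY : ∀ i j, Mhi i j ⊆ Y := by
    intro i j a ha
    rw [hY]
    exact Finset.mem_biUnion.mpr ⟨i, Finset.mem_univ i,
      Finset.mem_biUnion.mpr ⟨j, Finset.mem_univ j, Finset.mem_union_right _ ha⟩⟩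
  have hYX : Y ⊆ X := by
    intro a ha
    rw [hY] at ha
    simp only [Finset.mem_biUnion, Finset.mem_univ, true_and] at ha
    obtain ⟨i, j, h⟩ := ha
    rcases Finset.mem_union.mp h with h | h
    · exact hCX i (hloSub i j h)
    · exact hCX i (hhiSub i j h)
  have hcluster_eq : ∀ {x : Fin d → ℝ} {i i' : Fin k}, x ∈ C i → x ∈ C i' → i = i' := by
    intro x i i' h h'
    by_contra hne
    exact Finset.disjoint_left.mp (hdisj i i' hne) h h'
  constructor
  · constructor
    · -- forward direction
      rintro ⟨W, hWX, hWc, hexp⟩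
      refine ⟨W ∩ Y, Finset.inter_subset_right,
        le_trans (Finset.card_le_card Finset.inter_subset_left) hWc, ?_⟩
      have h := hexp.inter Y
      have hset : (X \ W) ∩ Y = Y \ (W ∩ Y) := by
        ext x
        simp only [Finset.mem_inter, Finset.mem_sdiff]
        constructor
        · tauto
        · intro hx; exact ⟨⟨hYX hx.1, fun hw => hx.2 ⟨hw, hx.1⟩⟩, hx.1⟩
      have hlist : (List.ofFn fun i => C i \ W).map (· ∩ Y)
          = List.ofFn fun i => (C i ∩ Y) \ (W ∩ Y) := by
        rw [List.map_ofFn]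
        congr 1
        funext i
        ext x
        simp only [Function.comp_apply, Finset.mem_inter, Finset.mem_sdiff]
        tauto
      rwa [hset, hlist] at h
    · -- backward direction
      rintro ⟨W', hW'Y, hW'c, hexp⟩
      rcases Nat.eq_zero_or_pos d with hd | hd
      · -- degenerate case d = 0
        subst hd
        have : IsEmpty (Fin 0) := by infer_instance
        have hsing := hexp.eq_singleton
        have hk : k = 1 := by
          have := congrArg List.length hsing
          simpa using this
        subst hk
        refine ⟨∅, Finset.empty_subset _, by simp, ?_⟩
        have hXC : X = C 0 := by
          rw [hX]
          ext x
          simp only [Finset.mem_biUnion, Finset.mem_univ, true_and]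
          exact ⟨fun ⟨i, hi⟩ => by rwa [Subsingleton.elim (0 : Fin 1) i], fun h => ⟨0, h⟩⟩
        have : (List.ofFn fun i : Fin 1 => C i \ (∅ : Finset (Fin 0 → ℝ))) = [X \ ∅] := by
          simp [List.ofFn_succ, hXC]
        rw [this]
        exact IsExplainable.leaf _
      · -- main case d > 0
        refine ⟨W', hW'Y.trans hYX, hW'c, ?_⟩
        set esc : (Fin d → ℝ) → Finset (Fin d → ℝ) := fun x =>
          if h : ∃ i, x ∈ C i then (C h.choose ∩ Y) \ W' else ∅ with hescdef
        have hescx : ∀ (x : Fin d → ℝ) (hex : ∃ i, x ∈ C i),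
            esc x = (C hex.choose ∩ Y) \ W' := by
          intro x hex
          simp only [hescdef]
          rw [dif_pos hex]
        have hkey : ∀ x ∈ X, x ∉ Y → ∃ i, x ∈ C i ∧ esc x = (C i ∩ Y) \ W' ∧
            ∀ j, (∃ a ∈ (C i ∩ Y) \ W', a j ≤ x j) ∧ (∃ b ∈ (C i ∩ Y) \ W', x j ≤ b j) := by
          intro x hxX hxY
          have hex : ∃ i, x ∈ C i := by
            have h' := hxX
            rw [hX] at h'
            simp only [Finset.mem_biUnion, Finset.mem_univ, true_and] at h'
            exact h'
          refine ⟨hex.choose, hex.choose_spec, hescx x hex, ?_⟩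
          intro j
          set i := hex.choose with hidef
          have hxC : x ∈ C i := hex.choose_spec
          constructor
          · have hnotlo : x ∉ Mlo i j := fun h => hxY (hMloY i j h)
            have hcard : (Mlo i j).card = s + 1 := by
              rcases le_or_gt (s + 1) (C i).card with h | h
              · rw [hloCard, min_eq_left h]
              · exfalso
                have heq : Mlo i j = C i :=
                  Finset.eq_of_subset_of_card_le (hloSub i j)
                    (by rw [hloCard, min_eq_right h.le])
                exact hnotlo (heq ▸ hxC)
            have hns : ¬ Mlo i j ⊆ W' := by
              intro hsub
              have := Finset.card_le_card hsub
              omega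
            obtain ⟨a, ha, haW⟩ := Finset.not_subset.mp hns
            exact ⟨a, Finset.mem_sdiff.mpr
              ⟨Finset.mem_inter.mpr ⟨hloSub i j ha, hMloY i j ha⟩, haW⟩,
              hloOrd i j a ha x hxC hnotlo⟩
          · have hnothi : x ∉ Mhi i j := fun h => hxY (hMhiY i j h)
            have hcard : (Mhi i j).card = s + 1 := by
              rcases le_or_gt (s + 1) (C i).card with h | h
              · rw [hhiCard, min_eq_left h]
              · exfalso
                have heq : Mhi i j = C i :=
                  Finset.eq_of_subset_of_card_le (hhiSub i j)
                    (by rw [hhiCard, min_eq_right h.le])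
                exact hnothi (heq ▸ hxC)
            have hns : ¬ Mhi i j ⊆ W' := by
              intro hsub
              have := Finset.card_le_card hsub
              omega
            obtain ⟨b, hb, hbW⟩ := Finset.not_subset.mp hns
            exact ⟨b, Finset.mem_sdiff.mpr
              ⟨Finset.mem_inter.mpr ⟨hhiSub i j hb, hMhiY i j hb⟩, hbW⟩,
              hhiOrd i j b hb x hxC hnothi⟩
        have h1 : (X \ W').filter (· ∈ Y \ W') = Y \ W' := by
          ext x
          simp only [Finset.mem_filter, Finset.mem_sdiff]
          constructor
          · tauto
          · intro hx
            exact ⟨⟨hYX hx.1, hx.2⟩, hx⟩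
        have h2 : ∀ x ∈ X \ W', x ∉ Y \ W' →
            esc x ∈ (List.ofFn fun i => (C i ∩ Y) \ W') ∧
            (∀ j, (∃ a ∈ esc x, a j ≤ x j) ∧ ∃ b ∈ esc x, x j ≤ b j) := by
          intro x hx hxy
          have hxX : x ∈ X := (Finset.mem_sdiff.mp hx).1
          have hxW : x ∉ W' := (Finset.mem_sdiff.mp hx).2
          have hxY : x ∉ Y := fun h => hxy (Finset.mem_sdiff.mpr ⟨h, hxW⟩)
          obtain ⟨i, hxC, hesceq, hsand⟩ := hkey x hxX hxY
          constructor
          · rw [List.mem_ofFn]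
            exact ⟨i, hesceq.symm⟩
          · intro j
            rw [hesceq]
            exact hsand j
        have hlift := lift_explainable (Y \ W') esc hexp (X \ W') h1 h2
        have hfin : ((List.ofFn fun i => (C i ∩ Y) \ W').map
            fun A => A ∪ (X \ W').filter fun x => x ∉ Y \ W' ∧ esc x = A)
            = List.ofFn fun i => C i \ W' := by
          rw [List.map_ofFn]
          congr 1
          funext i
          simp only [Function.comp_apply]
          ext x
          simp only [Finset.mem_union, Finset.mem_sdiff, Finset.mem_inter, Finset.mem_filter]
          constructor
          · rintro (⟨⟨hc, _⟩, hw⟩ | ⟨⟨hxX, hxW⟩, hxy, hesceq⟩)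
            · exact ⟨hc, hw⟩
            · have hxY : x ∉ Y := fun h => hxy ⟨h, hxW⟩
              obtain ⟨i0, hxC0, hesceq0, hsand⟩ := hkey x hxX hxY
              obtain ⟨a, ha, -⟩ := (hsand ⟨0, hd⟩).1
              have haesc : a ∈ esc x := by rw [hesceq0]; exact ha
              have ha2 : a ∈ (C i ∩ Y) \ W' := by rw [← hesceq]; exact haesc
              have hii : i0 = i := hcluster_eq
                (Finset.mem_inter.mp (Finset.mem_sdiff.mp ha).1).1
                (Finset.mem_inter.mp (Finset.mem_sdiff.mp ha2).1).1
              exact ⟨hii ▸ hxC0, hxW⟩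
          · rintro ⟨hxC, hxW⟩
            by_cases hxY : x ∈ Y
            · exact Or.inl ⟨⟨hxC, hxY⟩, hxW⟩
            · refine Or.inr ⟨⟨hCX i hxC, hxW⟩, fun h => hxY h.1, ?_⟩
              obtain ⟨i0, hxC0, hesceq0, -⟩ := hkey x (hCX i hxC) hxY
              rw [hesceq0, hcluster_eq hxC0 hxC]
        rwa [hfin] at hlift
  · -- cardinality bound
    rw [hY]
    calc (Finset.univ.biUnion fun i : Fin k =>
            Finset.univ.biUnion fun j : Fin d => Mlo i j ∪ Mhi i j).card
        ≤ ∑ i : Fin k, (Finset.univ.biUnion fun j : Fin d => Mlo i j ∪ Mhi i j).card :=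
          Finset.card_biUnion_le
      _ ≤ ∑ _i : Fin k, ∑ _j : Fin d, (2 * (s + 1)) := by
          apply Finset.sum_le_sum
          intro i _
          calc (Finset.univ.biUnion fun j : Fin d => Mlo i j ∪ Mhi i j).card
              ≤ ∑ j : Fin d, (Mlo i j ∪ Mhi i j).card := Finset.card_biUnion_le
            _ ≤ ∑ _j : Fin d, (2 * (s + 1)) := by
                apply Finset.sum_le_sum
                intro j _
                calc (Mlo i j ∪ Mhi i j).card ≤ (Mlo i j).card + (Mhi i j).card :=
                      Finset.card_union_le _ _
                  _ ≤ (s + 1) + (s + 1) := add_le_add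
                      (by rw [hloCard]; exact min_le_left _ _)
                      (by rw [hhiCard]; exact min_le_left _ _)
                  _ = 2 * (s + 1) := by ring
      _ = 2 * (s + 1) * d * k := by
          simp [Finset.sum_const, Finset.card_univ]
          ring
end

section
/- Key step of the data-reduction correctness: let C_j be a cluster in which, ordering by i-th coordinate, the first s+1 points are marked. Suppose W is a set of at most s removed points and all marked points of C_j \ W lie in the region {x : x[i] > θ}. Then every point of C_j \ W (including unmarked points) has i-th coordinate greater than θ. -/
/-- let `M` be the `s+1` marked points of `Cj` with smallest `i`-th
coordinate, and `W` a set of at most `s` removed points. If every surviving marked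
point has `i`-th coordinate greater than `θ`, then every surviving point of `Cj`
(including unmarked ones) has `i`-th coordinate greater than `θ`. -/
theorem marked_survivor_bound {d : ℕ} (Cj M W : Finset (Fin d → ℝ)) (i : Fin d)
    (s : ℕ) (θ : ℝ)
    (hcard : s + 2 ≤ Cj.card)
    (hM : M ⊆ Cj) (hMcard : M.card = s + 1)
    (horder : ∀ x ∈ M, ∀ y ∈ Cj, y ∉ M → x i ≤ y i)
    (hW : W.card ≤ s)
    (hmarked : ∀ x ∈ M, x ∉ W → θ < x i) :
    ∀ y ∈ Cj, y ∉ W → θ < y i := by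
  obtain ⟨x, hxM, hxW⟩ : ∃ x ∈ M, x ∉ W := by
    by_contra h
    push_neg at h
    have : M ⊆ W := fun a ha => h a ha
    have := Finset.card_le_card this
    omega
  intro y hy hyW
  by_cases hyM : y ∈ M
  · exact hmarked y hyM hyW
  · exact lt_of_lt_of_le (hmarked x hxM hxW) (horder x hxM y hy hyM)
end

section
/- In the hitting-set reduction, if H ⊆ U is a hitting set for A, then removing W = {v_u : u ∈ H} makes the clustering {C_0 \ W, C_1,...,C_m} explainable: for each j one can pick u ∈ H ∩ S_j and its distinguishing coordinate i ∈ I_j, and the cut at coordinate i with threshold 0 separates C_j from all other remaining points; iterating these cuts yields a threshold tree with m+1 leaves realizing the clustering. -/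
/-- Coordinates of the hitting-set reduction: one block `I_j` per set `S j`, with one
coordinate per element of `S j`. -/
abbrev HSIdx {U : Type} {m : ℕ} (S : Fin m → Finset U) : Type := (j : Fin m) × {u : U // u ∈ S j}

/-- The point `v_u` has a `1` in exactly the distinguishing coordinate of `I_j` for each
set `S j` containing `u`, and `0` elsewhere. -/
def vPt {U : Type} [DecidableEq U] {m : ℕ} (S : Fin m → Finset U) (u : U) : HSIdx S → ℝ :=
  fun c => if (c.2 : U) = u then 1 else 0

/-- The point `w_j` is `1` exactly on the coordinates of block `I_j`. -/
def wPt {U : Type} {m : ℕ} (S : Fin m → Finset U) (j : Fin m) : HSIdx S → ℝ :=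
  fun c => if c.1 = j then 1 else 0


lemma explanation_of_hittingSet_aux {U : Type} [Fintype U] [DecidableEq U] {m : ℕ}
    (S : Fin m → Finset U) (H : Finset U) (hH : ∀ j, ∃ u ∈ H, u ∈ S j) :
    ∀ l : List (Fin m), l.Nodup →
    IsExplainable
      (((insert (fun _ => (0 : ℝ)) (Finset.univ.image (vPt S)) ∪
          (l.map (wPt S)).toFinset) : Finset (HSIdx S → ℝ)) \ H.image (vPt S))
      (((insert (fun _ => (0 : ℝ)) (Finset.univ.image (vPt S)) : Finset (HSIdx S → ℝ))
            \ H.image (vPt S))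
        :: l.map fun j => ({wPt S j} : Finset (HSIdx S → ℝ)) \ H.image (vPt S)) := by
  intro l hl
  induction l with
  | nil => simpa using IsExplainable.leaf _
  | cons j l ih =>
    obtain ⟨u, huH, huS⟩ := hH j
    have hj : j ∉ l := (List.nodup_cons.1 hl).1
    set i : HSIdx S := ⟨j, ⟨u, huS⟩⟩ with hi
    set C0 : Finset (HSIdx S → ℝ) := insert (fun _ => (0 : ℝ)) (Finset.univ.image (vPt S))
    set W : Finset (HSIdx S → ℝ) := H.image (vPt S)
    set X : Finset (HSIdx S → ℝ) := (C0 ∪ ((j :: l).map (wPt S)).toFinset) \ W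
    -- every point of C0 \ W vanishes at coordinate i
    have hC0 : ∀ x : HSIdx S → ℝ, x ∈ C0 → x ∉ W → x i = 0 := by
      intro x hx hxW
      rcases Finset.mem_insert.1 hx with h | h
      · simp [h]
      · obtain ⟨u', -, rfl⟩ := Finset.mem_image.1 h
        by_cases hu' : u' = u
        · subst hu'
          exact absurd (Finset.mem_image.2 ⟨u', huH, rfl⟩) hxW
        · show (if ((i.2 : U) = u') then (1:ℝ) else 0) = 0
          exact if_neg (fun h => hu' (show u = u' from h).symm)
    have hwj : wPt S j i = 1 := by simp [wPt, hi]
    have hwj' : ∀ j' : Fin m, j' ≠ j → wPt S j' i = 0 := by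
      intro j' hne; simp [wPt, hi, hne.symm]
    have h1 : X.filter (fun x => x i ≤ (0:ℝ)) =
        (C0 ∪ (l.map (wPt S)).toFinset) \ W := by
      ext x
      simp only [Finset.mem_filter, Finset.mem_sdiff, Finset.mem_union, List.mem_toFinset,
        List.mem_map, List.mem_cons, X]
      constructor
      · rintro ⟨⟨hx | ⟨j', hj', rfl⟩, hxW⟩, hle⟩
        · exact ⟨Or.inl hx, hxW⟩
        · rcases hj' with rfl | hj'
          · rw [hwj] at hle; linarith
          · exact ⟨Or.inr ⟨j', hj', rfl⟩, hxW⟩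
      · rintro ⟨hx | ⟨j', hj', rfl⟩, hxW⟩
        · exact ⟨⟨Or.inl hx, hxW⟩, le_of_eq (hC0 x hx hxW)⟩
        · have hne : j' ≠ j := fun h => hj (h ▸ hj')
          exact ⟨⟨Or.inr ⟨j', Or.inr hj', rfl⟩, hxW⟩, le_of_eq (hwj' j' hne)⟩
    have h2 : X.filter (fun x => (0:ℝ) < x i) =
        ({wPt S j} : Finset (HSIdx S → ℝ)) \ W := by
      ext x
      simp only [Finset.mem_filter, Finset.mem_sdiff, Finset.mem_union, List.mem_toFinset,
        List.mem_map, List.mem_cons, Finset.mem_singleton, X]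
      constructor
      · rintro ⟨⟨hx | ⟨j', hj', rfl⟩, hxW⟩, hlt⟩
        · exact absurd (hC0 x hx hxW) (by linarith)
        · rcases hj' with rfl | hj'
          · exact ⟨rfl, hxW⟩
          · have hne : j' ≠ j := fun h => hj (h ▸ hj')
            rw [hwj' j' hne] at hlt; linarith
      · rintro ⟨rfl, hxW⟩
        exact ⟨⟨Or.inr ⟨j, Or.inl rfl, rfl⟩, hxW⟩, by rw [hwj]; norm_num⟩
    have hnode := IsExplainable.node X i 0 _ [({wPt S j} : Finset (HSIdx S → ℝ)) \ W]
      (by rw [h1]; exact ih (List.nodup_cons.1 hl).2)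
      (by rw [h2]; exact IsExplainable.leaf _)
    refine IsExplainable.perm _ _ _ ?_ hnode
    exact (List.perm_append_singleton _ _).trans (List.Perm.swap _ _ _)

/-- in the hitting-set reduction, if `H` is a hitting set for
`{S_1, …, S_m}`, then removing `W = {v_u : u ∈ H}` makes the clustering
`{C_0 \ W, C_1 \ W, …, C_m \ W}` explainable: for each `j` the cut at the
distinguishing coordinate of some `u ∈ H ∩ S j` with threshold `0` splits off `C_j`,
and iterating these cuts yields a threshold tree with `m + 1` leaves. -/
theorem explanation_of_hittingSet {U : Type} [Fintype U] [DecidableEq U] {m : ℕ}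
    (S : Fin m → Finset U) (H : Finset U) (hH : ∀ j, ∃ u ∈ H, u ∈ S j) :
    IsExplainable
      (((insert (fun _ => (0 : ℝ)) (Finset.univ.image (vPt S)) ∪
          Finset.univ.image (wPt S)) : Finset (HSIdx S → ℝ)) \ H.image (vPt S))
      (((insert (fun _ => (0 : ℝ)) (Finset.univ.image (vPt S)) : Finset (HSIdx S → ℝ))
            \ H.image (vPt S))
        :: List.ofFn fun j => ({wPt S j} : Finset (HSIdx S → ℝ)) \ H.image (vPt S)) := by
  have h := explanation_of_hittingSet_aux S H hH (List.finRange m) (List.nodup_finRange m)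
  have himg : ((List.finRange m).map (wPt S)).toFinset = Finset.univ.image (wPt S) := by
    ext x
    simp [List.mem_map]
  rw [himg] at h
  rw [List.ofFn_eq_map]
  exact h
end

section
/- In the reduction from Hitting Set to explainable k-means: if S = {u_{i_1},...,u_{i_k}} is a hitting set for W = {W_1,...,W_m}, then the clustering defined by C_1 = {x ∈ X : x[i_1] = 1} and C_j = {x ∈ X : x[i_j] = 1} \ (C_1 ∪ ... ∪ C_{j-1}) for j = 2,...,k+1 (with the convention that C_{k+1} collects all remaining points) is an explainable (k+1)-clustering of X, realized by the sequence of cuts Cut_{i_1,0}, ..., Cut_{i_k,0}. -/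
/-- The basis point `e_i ∈ {0,1}^n`. -/
def basisPt (n : ℕ) (i : Fin n) : Fin n → ℝ := fun c => if c = i then 1 else 0

/-- The characteristic vector of the set `A j ⊆ {1,…,n}`. -/
def charPt {n m : ℕ} (A : Fin m → Finset (Fin n)) (j : Fin m) : Fin n → ℝ :=
  fun c => if c ∈ A j then 1 else 0

lemma caterpillar {n : ℕ} : ∀ (k : ℕ) (idx : Fin k → Fin n) (X : Finset (Fin n → ℝ)),
    (∀ x ∈ X, ∀ t, x (idx t) = 0 ∨ x (idx t) = 1) →
    IsExplainable X
      ((List.ofFn fun t => X.filter fun x =>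
          x (idx t) = 1 ∧ ∀ t', t' < t → x (idx t') ≠ 1)
        ++ [X.filter fun x => ∀ t, x (idx t) ≠ 1]) := by
  intro k
  induction k with
  | zero =>
    intro idx X hbin
    have h1 : (X.filter fun x => ∀ t : Fin 0, x (idx t) ≠ 1) = X := by
      apply Finset.filter_true_of_mem; intro x _; exact fun t => t.elim0
    simp only [List.ofFn_zero, List.nil_append, h1]
    exact IsExplainable.leaf X
  | succ k ih =>
    intro idx X hbin
    set X' := X.filter (fun x => x (idx 0) ≤ 0) with hX'
    have hbin' : ∀ x ∈ X', ∀ t : Fin k, x (idx t.succ) = 0 ∨ x (idx t.succ) = 1 := by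
      intro x hx t
      exact hbin x (Finset.mem_filter.mp hx).1 t.succ
    have hC0 : (X.filter fun x => (0:ℝ) < x (idx 0)) =
        X.filter (fun x => x (idx 0) = 1 ∧ ∀ t', t' < (0 : Fin (k+1)) → x (idx t') ≠ 1) := by
      ext x
      simp only [Finset.mem_filter]
      constructor
      · rintro ⟨hx, h0⟩
        refine ⟨hx, ?_, ?_⟩
        · rcases hbin x hx 0 with h | h
          · rw [h] at h0; exact absurd h0 (lt_irrefl 0)
          · exact h
        · intro t' ht'; exact absurd ht' (Fin.not_lt_zero t')
      · rintro ⟨hx, h1, _⟩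
        exact ⟨hx, by rw [h1]; norm_num⟩
    have htail : ∀ t : Fin k,
        (X'.filter fun x => x (idx t.succ) = 1 ∧ ∀ t', t' < t → x (idx t'.succ) ≠ 1) =
        X.filter (fun x => x (idx t.succ) = 1 ∧ ∀ t', t' < t.succ → x (idx t') ≠ 1) := by
      intro t
      ext x
      simp only [hX', Finset.mem_filter, and_assoc]
      constructor
      · rintro ⟨hx, h0, h1, h2⟩
        refine ⟨hx, h1, ?_⟩
        intro t' ht'
        induction t' using Fin.cases with
        | zero =>
          rcases hbin x hx 0 with h | h
          · rw [h]; norm_num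
          · rw [h] at h0; norm_num at h0
        | succ s => exact h2 s (Fin.succ_lt_succ_iff.mp ht')
      · rintro ⟨hx, h1, h2⟩
        have h0 := h2 0 (Fin.succ_pos t)
        refine ⟨hx, ?_, h1, fun s hs => h2 s.succ (Fin.succ_lt_succ_iff.mpr hs)⟩
        rcases hbin x hx 0 with h | h
        · rw [h]
        · exact absurd h h0
    have hlast : (X'.filter fun x => ∀ t : Fin k, x (idx t.succ) ≠ 1) =
        X.filter (fun x => ∀ t : Fin (k+1), x (idx t) ≠ 1) := by
      ext x
      simp only [hX', Finset.mem_filter, and_assoc]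
      constructor
      · rintro ⟨hx, h0, h2⟩
        refine ⟨hx, ?_⟩
        intro t
        induction t using Fin.cases with
        | zero =>
          rcases hbin x hx 0 with h | h
          · rw [h]; norm_num
          · rw [h] at h0; norm_num at h0
        | succ s => exact h2 s
      · rintro ⟨hx, h2⟩
        refine ⟨hx, ?_, fun s => h2 s.succ⟩
        rcases hbin x hx 0 with h | h
        · rw [h]
        · exact absurd h (h2 0)
    have hL1 := ih (fun t => idx t.succ) X' hbin'
    have heq1 : (List.ofFn fun t : Fin k => X'.filter fun x =>
          x (idx t.succ) = 1 ∧ ∀ t', t' < t → x (idx t'.succ) ≠ 1) =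
        (List.ofFn fun t : Fin k => X.filter fun x =>
          x (idx t.succ) = 1 ∧ ∀ t', t' < t.succ → x (idx t') ≠ 1) := by
      congr 1; funext t; exact htail t
    rw [heq1, hlast] at hL1
    have hL2 : IsExplainable (X.filter fun x => (0:ℝ) < x (idx 0))
        [X.filter (fun x => x (idx 0) = 1 ∧ ∀ t', t' < (0 : Fin (k+1)) → x (idx t') ≠ 1)] := by
      rw [hC0]; exact IsExplainable.leaf _
    have hnode := IsExplainable.node X (idx 0) 0 _ _ hL1 hL2
    refine IsExplainable.perm X _ _ ?_ hnode
    rw [List.ofFn_succ]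
    exact List.perm_append_singleton _ _

/-- in the reduction from Hitting Set to explainable k-means, if
`{u_{i_1}, …, u_{i_k}}` (given by the injective map `idx`) is a hitting set for the
family `A`, then the clustering `C_1, …, C_k, C_{k+1}` defined by successively
splitting off `{x : x[i_t] = 1}` (with `C_{k+1}` collecting all remaining points)
is an explainable `(k+1)`-clustering of `X`, realized by the cuts
`Cut_{i_1,0}, …, Cut_{i_k,0}`. -/
theorem hittingSet_caterpillar_explainable {n m k : ℕ}
    (A : Fin m → Finset (Fin n))
    (idx : Fin k → Fin n) (hinj : Function.Injective idx)
    (hhit : ∀ j, ∃ t : Fin k, idx t ∈ A j)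
    (X : Finset (Fin n → ℝ))
    (hX : X = (Finset.univ.image (basisPt n)) ∪ (Finset.univ.image (charPt A)) ∪
      {fun _ => 0})
    (Cl : Fin k → Finset (Fin n → ℝ))
    (hCl : ∀ t, Cl t = X.filter fun x =>
        x (idx t) = 1 ∧ ∀ t' : Fin k, t' < t → x (idx t') ≠ 1)
    (Clast : Finset (Fin n → ℝ))
    (hClast : Clast = X.filter fun x => ∀ t : Fin k, x (idx t) ≠ 1) :
    IsExplainable X (List.ofFn Cl ++ [Clast]) := by
  have hbin : ∀ x ∈ X, ∀ t : Fin k, x (idx t) = 0 ∨ x (idx t) = 1 := by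
    intro x hx t
    rw [hX] at hx
    simp only [Finset.mem_union, Finset.mem_image, Finset.mem_singleton] at hx
    rcases hx with (⟨i, _, rfl⟩ | ⟨j, _, rfl⟩) | rfl
    · unfold basisPt; split <;> simp
    · unfold charPt; split <;> simp
    · simp
  have hCl' : Cl = fun t => X.filter fun x =>
      x (idx t) = 1 ∧ ∀ t' : Fin k, t' < t → x (idx t') ≠ 1 := funext hCl
  rw [hCl', hClast]
  exact caterpillar k idx X hbin
end

section
/- In the hitting-set-to-k-means reduction, the constructed clustering from a hitting set S of size k has k-means cost at most B = m(r−1) + s(n−k): taking centers c_j = e_{i_j} for j ≤ k and c_{k+1} = 0, each characteristic vector w (with exactly r ones and a 1 at coordinate i_j) contributes ||w − e_{i_j}||² = r − 1, each basis vector e_h in the last cluster contributes 1, and all other points contribute 0. -/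
/-- The k-means cost of a cluster given as a multiset of points: the infimum over
centers `c` of the sum of squared Euclidean distances to `c`. -/
noncomputable def kmeansCost {n : ℕ} (M : Multiset (EuclideanSpace ℝ (Fin n))) : ℝ :=
  ⨅ c : EuclideanSpace ℝ (Fin n), ((M.map fun x => ‖x - c‖ ^ 2).sum)

open Finset

lemma kmeansCost_le_sum {n : ℕ} (M : Multiset (EuclideanSpace ℝ (Fin n)))
    (c : EuclideanSpace ℝ (Fin n)) :
    kmeansCost M ≤ (M.map fun x => ‖x - c‖ ^ 2).sum :=
  ciInf_le ⟨0, Set.forall_mem_range.2 fun _ => Multiset.sum_nonneg fun _ hy => by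
    obtain ⟨_, _, rfl⟩ := Multiset.mem_map.1 hy; positivity⟩ c

section
variable {ι : Type*} [Fintype ι] [DecidableEq ι]

lemma norm_sq_sum_single_one (T : Finset ι) :
    ‖∑ c ∈ T, EuclideanSpace.single c (1 : ℝ)‖ ^ 2 = #T := by
  simp [EuclideanSpace.norm_sq_eq, WithLp.ofLp_sum, Finset.sum_apply]

lemma norm_sq_sum_single_one_sub_single {T : Finset ι} {i : ι} (hi : i ∈ T) :
    ‖∑ c ∈ T, EuclideanSpace.single c (1 : ℝ) - EuclideanSpace.single i 1‖ ^ 2 =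
      (#T - 1 : ℕ) := by
  rw [← add_sum_erase _ _ hi, add_sub_cancel_left, norm_sq_sum_single_one, card_erase_of_mem hi]

end

section
variable {n : ℕ}

lemma kmeansCost_replicate_single_add_map_le {κ : Type*} (i : Fin n) (s r : ℕ) (F : Finset κ)
    (A : κ → Finset (Fin n)) (hr : ∀ j ∈ F, #(A j) = r) (hi : ∀ j ∈ F, i ∈ A j) :
    kmeansCost (Multiset.replicate s (EuclideanSpace.single i (1 : ℝ)) +
        F.val.map fun j => ∑ c ∈ A j, EuclideanSpace.single c (1 : ℝ)) ≤
      #F * (r - 1 : ℕ) :=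
  calc _ ≤ _ := kmeansCost_le_sum _ (EuclideanSpace.single i 1)
    _ = ∑ j ∈ F,
          ‖∑ c ∈ A j, EuclideanSpace.single c (1 : ℝ) - EuclideanSpace.single i 1‖ ^ 2 := by
      simp
    _ = ∑ j ∈ F, ((r - 1 : ℕ) : ℝ) := sum_congr rfl fun j hj => by
      rw [norm_sq_sum_single_one_sub_single (hi j hj), hr j hj]
    _ = _ := by simp

lemma kmeansCost_replicate_zero_add_bind_le (t s : ℕ) (U : Finset (Fin n)) :
    kmeansCost (Multiset.replicate t (0 : EuclideanSpace ℝ (Fin n)) +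
        U.val.bind fun c => Multiset.replicate s (EuclideanSpace.single c (1 : ℝ))) ≤
      s * #U :=
  calc _ ≤ _ := kmeansCost_le_sum _ 0
    _ = _ := by simp [Multiset.map_bind, Multiset.sum_bind, mul_comm]

end

/-- in the hitting-set-to-k-means reduction, the clustering built from a
hitting set `{u_{idx 1}, …, u_{idx k}}` has k-means cost at most
`B = m(r−1) + s(n−k)`: cluster `C_h` consists of `s` copies of `e_{idx h}` together
with the characteristic vectors `w_j` assigned to it (`f j = h`, with
`idx (f j) ∈ A j`), and the last cluster consists of `t` zero vectors and `s` copies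
of `e_c` for each unused coordinate `c`. -/
theorem hittingSet_clustering_cost {n m s t k r : ℕ}
    (A : Fin m → Finset (Fin n)) (hr : ∀ j, (A j).card = r)
    (idx : Fin k → Fin n) (hinj : Function.Injective idx)
    (f : Fin m → Fin k) (hf : ∀ j, idx (f j) ∈ A j) :
    (∑ h : Fin k, kmeansCost
        (Multiset.replicate s (EuclideanSpace.single (idx h) (1 : ℝ)) +
          ((Finset.univ.filter fun j => f j = h).val.map
            fun j => ∑ c ∈ A j, EuclideanSpace.single c (1 : ℝ)))) +
      kmeansCost
        (Multiset.replicate t (0 : EuclideanSpace ℝ (Fin n)) +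
          ((Finset.univ.filter fun c : Fin n => ∀ h, idx h ≠ c).val.bind
            fun c => Multiset.replicate s (EuclideanSpace.single c (1 : ℝ))))
      ≤ ((m * (r - 1) + s * (n - k) : ℕ) : ℝ) := by
  have hfibres : ∑ h, #{j | f j = h} = m := by
    simpa using (card_eq_sum_card_fiberwise (s := univ) fun j _ => mem_univ (f j)).symm
  have hunused : #{c | ∀ h, idx h ≠ c} = n - k := by
    rw [show ({c | ∀ h, idx h ≠ c} : Finset (Fin n)) = (univ.image idx)ᶜ by
        ext; simp [eq_comm],
      card_compl, card_image_of_injective _ hinj, card_univ, Fintype.card_fin, Fintype.card_fin]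
  calc _ ≤ ∑ h, (#{j | f j = h} : ℝ) * (r - 1 : ℕ) + s * #{c | ∀ h, idx h ≠ c} :=
        add_le_add
          (sum_le_sum fun h _ => kmeansCost_replicate_single_add_map_le _ _ _ _ _
            (fun j _ => hr j) fun j hj => (mem_filter.1 hj).2 ▸ hf j)
          (kmeansCost_replicate_zero_add_bind_le _ _ _)
    _ = _ := by
      rw [← sum_mul, ← Nat.cast_sum, hfibres, hunused]
      push_cast; ring
end
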